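/- Let J, I : [R₀,∞) → [0,∞) and ε, c₀ > 0 satisfy, for all R ≥ R₀: J(R) + ε c₀ ≤ C₁ I(R)^{1/p} R^{a} and I(R) ≤ C₂ J(R)^{1/q} R^{b}, where p, q > 1 and a, b ∈ ℝ. Then for all R ≥ R₀: ε c₀ ≤ C₃ R^{(pq/(pq−1))(b/p + a)} for some constant C₃ depending only on C₁, C₂, p, q. -/
import Mathlib


theorem stmt_9 (p q a b R₀ ε c₀ C₁ C₂ : ℝ)
    (hp : 1 < p) (hq : 1 < q) (hR₀ : 1 ≤ R₀)
    (hε : 0 < ε) (hc₀ : 0 < c₀) (hC₁ : 0 < C₁) (hC₂ : 0 < C₂)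
    (J I : ℝ → ℝ)
    (hJ : ∀ R, R₀ ≤ R → 0 ≤ J R) (hI : ∀ R, R₀ ≤ R → 0 ≤ I R)
    (h1 : ∀ R, R₀ ≤ R → J R + ε * c₀ ≤ C₁ * (I R) ^ (1 / p) * R ^ a)
    (h2 : ∀ R, R₀ ≤ R → I R ≤ C₂ * (J R) ^ (1 / q) * R ^ b) :
    ∃ C₃ : ℝ, 0 < C₃ ∧ ∀ R, R₀ ≤ R →
      ε * c₀ ≤ C₃ * R ^ ((p * q / (p * q - 1)) * (b / p + a)) := by
  have hp0 : (0:ℝ) < p := by linarith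
  have hq0 : (0:ℝ) < q := by linarith
  have hpq : 1 < p * q := by nlinarith
  have hpq0 : (0:ℝ) < p * q - 1 := by linarith
  set s := p * q / (p * q - 1) with hs
  set θ := 1 / (p * q) with hθ
  have hθ0 : 0 < θ := by rw [hθ]; positivity
  have hs0 : 0 < s := by rw [hs]; positivity
  have hsθ : 1 + s * θ = s := by
    rw [hs, hθ]; field_simp; ring
  have h1s : (1 - θ) * s = 1 := by
    rw [hs, hθ]; field_simp
  set K := C₁ * C₂ ^ (1/p) with hK
  have hK0 : 0 < K := by rw [hK]; positivity
  refine ⟨K ^ s, by positivity, fun R hR => ?_⟩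
  have hR1 : (1:ℝ) ≤ R := le_trans hR₀ hR
  have hR0 : (0:ℝ) < R := by linarith
  set M := R ^ (b/p + a) with hM
  have hM0 : 0 < M := Real.rpow_pos_of_pos hR0 _
  have hi := hI R hR
  have hj := hJ R hR
  have step1 : (I R) ^ (1/p) ≤ C₂ ^ (1/p) * (J R) ^ θ * R ^ (b/p) := by
    have h := Real.rpow_le_rpow hi (h2 R hR) (by positivity : (0:ℝ) ≤ 1/p)
    have e1 : 1/q * (1/p) = θ := by rw [hθ]; field_simp
    have e2 : b * (1/p) = b/p := by ring
    calc (I R)^(1/p) ≤ (C₂ * (J R)^(1/q) * R^b)^(1/p) := h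
      _ = C₂^(1/p) * (J R)^θ * R^(b/p) := by
          rw [Real.mul_rpow (mul_nonneg hC₂.le (Real.rpow_nonneg hj _))
                (Real.rpow_nonneg hR0.le _),
              Real.mul_rpow hC₂.le (Real.rpow_nonneg hj _),
              ← Real.rpow_mul hj, ← Real.rpow_mul hR0.le, e1, e2]
  have main : J R + ε * c₀ ≤ K * (J R) ^ θ * M := by
    calc J R + ε * c₀ ≤ C₁ * (I R) ^ (1/p) * R ^ a := h1 R hR
      _ ≤ C₁ * (C₂ ^ (1/p) * (J R) ^ θ * R ^ (b/p)) * R ^ a := by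
          apply mul_le_mul_of_nonneg_right _ (Real.rpow_nonneg hR0.le _)
          exact mul_le_mul_of_nonneg_left step1 hC₁.le
      _ = K * (J R) ^ θ * M := by
          rw [hM, Real.rpow_add hR0, hK]; ring
  have hjpos : 0 < J R := by
    rcases lt_or_eq_of_le hj with h | h
    · exact h
    · exfalso
      rw [← h, Real.zero_rpow (ne_of_gt hθ0)] at main
      nlinarith
  have hjθ : 0 < (J R) ^ θ := Real.rpow_pos_of_pos hjpos _
  have step2 : (J R) ^ (1 - θ) ≤ K * M := by
    have hsplit : (J R) ^ θ * (J R) ^ (1 - θ) = J R := by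
      rw [← Real.rpow_add hjpos]; norm_num
    have : (J R) ^ θ * (J R) ^ (1 - θ) ≤ (J R) ^ θ * (K * M) := by
      rw [hsplit]
      calc J R ≤ J R + ε * c₀ := by nlinarith
        _ ≤ K * (J R) ^ θ * M := main
        _ = (J R) ^ θ * (K * M) := by ring
    exact le_of_mul_le_mul_left this hjθ
  have step3 : J R ≤ (K * M) ^ s := by
    have h := Real.rpow_le_rpow (Real.rpow_nonneg hj _) step2 hs0.le
    rwa [← Real.rpow_mul hj, h1s, Real.rpow_one] at h
  have step4 : (J R) ^ θ ≤ (K * M) ^ (s * θ) := by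
    have h := Real.rpow_le_rpow hj step3 hθ0.le
    rwa [← Real.rpow_mul (by positivity)] at h
  calc ε * c₀ ≤ K * (J R) ^ θ * M := by nlinarith [main, hj]
    _ ≤ K * (K * M) ^ (s * θ) * M := by
        apply mul_le_mul_of_nonneg_right _ hM0.le
        exact mul_le_mul_of_nonneg_left step4 hK0.le
    _ = K ^ s * M ^ s := by
        have kk : K * K ^ (s*θ) = K ^ s := by
          conv_rhs => rw [← hsθ]
          rw [Real.rpow_add hK0, Real.rpow_one]
        have mm : M * M ^ (s*θ) = M ^ s := by
          conv_rhs => rw [← hsθ]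
          rw [Real.rpow_add hM0, Real.rpow_one]
        rw [Real.mul_rpow hK0.le hM0.le, ← kk, ← mm]; ring
    _ = K ^ s * R ^ (s * (b/p + a)) := by
        rw [hM, ← Real.rpow_mul hR0.le, mul_comm (b/p+a) s]
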